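/- arXiv:2505.11695 — 3 statements merged into one kernel-verified Lean document; each statement's English description precedes it below -/
import Mathlib

section
/- (Equivalence theorem for Qronos.) Let X, X̃ ∈ ℝ^{m×N} with X̃ of full column rank, let 𝒜 ⊆ ℝ be finite nonempty with round-to-nearest map 𝒬, and fix w ∈ ℝ^N. Define iterates (q_t, w^{(t)}) for t = 1,…,N by: w^{(0)} = w; q_t = 𝒬( ⟨Xw − Σ_{j<t} q_j X̃_j − Σ_{j>t} w^{(t−1)}_j X̃_j , X̃_t⟩ / ‖X̃_t‖² ); and w^{(t)}_{≥t+1} = X̃_{≥t+1}† ( Xw − Σ_{j≤t} q_j X̃_j ), i.e., w^{(t)}_{≥t+1} is the unique minimizer over v ∈ ℝ^{N−t} of ½‖Xw − Σ_{j≤t} q_j X̃_j − Σ_{j>t} v_j X̃_j‖². Define alternative iterates (q̂_t, ŵ^{(t)}) by: ŵ^{(0)} = w; q̂₁ = q₁ and ŵ^{(1)}_{≥2} = w^{(1)}_{≥2} computed by the same formulas; and for t = 2,…,N: q̂_t = 𝒬(ŵ^{(t−1)}_t) and ŵ^{(t)}_{≥t+1} = ŵ^{(t−1)}_{≥t+1}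 − (ŵ^{(t−1)}_t − q̂_t) · X̃_{≥t+1}† X̃_t, i.e., ŵ^{(t)}_{≥t+1} is the unique minimizer over v ∈ ℝ^{N−t} of ½‖(q̂_t − ŵ^{(t−1)}_t) X̃_t + Σ_{j>t} (v_j − ŵ^{(t−1)}_j) X̃_j‖². Then for every t = 1,…,N, q_t = q̂_t and w^{(t−1)}_{≥t} = ŵ^{(t−1)}_{≥t}. -/
open Matrix


private lemma qronos_quad_aux {a b : ℝ} (h : ∀ ε : ℝ, 0 ≤ a * ε ^ 2 - 2 * (b * ε)) : b = 0 := by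
  by_contra hb
  have hb2 : 0 < b ^ 2 := by positivity
  rcases le_or_gt a 0 with ha | ha
  · have h1 := h b
    nlinarith [mul_nonneg (neg_nonneg.mpr ha) (sq_nonneg b)]
  · have h1 := h (b / a)
    have h2 : a * (b / a) ^ 2 - 2 * (b * (b / a)) = -(b ^ 2 / a) := by
      field_simp; ring
    rw [h2] at h1
    have h3 : 0 < b ^ 2 / a := div_pos hb2 ha
    linarith

private lemma qronos_sum_dot {m N : ℕ} {S : Finset (Fin N)} (f : Fin N → Fin m → ℝ)
    (y : Fin m → ℝ) : (∑ j ∈ S, f j) ⬝ᵥ y = ∑ j ∈ S, f j ⬝ᵥ y := by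
  simp only [dotProduct, Finset.sum_apply, Finset.sum_mul]
  exact Finset.sum_comm

private lemma qronos_orth_of_min {m N : ℕ} {S : Finset (Fin N)} (c : Fin N → Fin m → ℝ)
    (r : Fin m → ℝ) (u : Fin N → ℝ)
    (h : ∀ v : Fin N → ℝ,
      (r - ∑ j ∈ S, u j • c j) ⬝ᵥ (r - ∑ j ∈ S, u j • c j) ≤
      (r - ∑ j ∈ S, v j • c j) ⬝ᵥ (r - ∑ j ∈ S, v j • c j)) :
    ∀ k ∈ S, (r - ∑ j ∈ S, u j • c j) ⬝ᵥ c k = 0 := by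
  classical
  intro k hk
  apply qronos_quad_aux (a := c k ⬝ᵥ c k)
  intro ε
  have h1 := h (fun j => u j + if j = k then ε else 0)
  have h2 : ∑ j ∈ S, (u j + if j = k then ε else 0) • c j
      = (∑ j ∈ S, u j • c j) + ε • c k := by
    simp only [add_smul, Finset.sum_add_distrib, ite_smul, zero_smul]
    rw [Finset.sum_ite_eq' S k (fun j => ε • c j)]
    simp [hk]
  rw [h2] at h1
  set R := r - ∑ j ∈ S, u j • c j with hRdef
  have h3 : r - ((∑ j ∈ S, u j • c j) + ε • c k) = R - ε • c k := by
    rw [hRdef]; abel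
  rw [h3] at h1
  have h4 : (R - ε • c k) ⬝ᵥ (R - ε • c k)
      = R ⬝ᵥ R - 2 * ((R ⬝ᵥ c k) * ε) + (c k ⬝ᵥ c k) * ε ^ 2 := by
    simp only [sub_dotProduct, dotProduct_sub, smul_dotProduct, dotProduct_smul, smul_eq_mul]
    rw [dotProduct_comm (c k) R]
    ring
  rw [h4] at h1
  linarith

private lemma qronos_col_inj {m N : ℕ} {Xt : Matrix (Fin m) (Fin N) ℝ}
    (hfull : IsUnit (Xtᵀ * Xt).det) (S : Finset (Fin N)) (c : Fin N → ℝ)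
    (h : ∀ k ∈ S, (∑ j ∈ S, c j • (fun i => Xt i j)) ⬝ᵥ (fun i => Xt i k) = 0) :
    ∀ k ∈ S, c k = 0 := by
  classical
  set c' : Fin N → ℝ := fun j => if j ∈ S then c j else 0 with hc'
  have hy : Xt *ᵥ c' = ∑ j ∈ S, c j • (fun i => Xt i j) := by
    funext i
    simp only [Matrix.mulVec, dotProduct, Finset.sum_apply, Pi.smul_apply, smul_eq_mul, hc',
      mul_ite, mul_zero]
    rw [Finset.sum_ite_mem, Finset.univ_inter]
    exact Finset.sum_congr rfl fun j _ => mul_comm _ _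
  have hyy : (Xt *ᵥ c') ⬝ᵥ (Xt *ᵥ c') = 0 := by
    nth_rewrite 1 [hy]
    rw [qronos_sum_dot]
    refine Finset.sum_eq_zero fun j hj => ?_
    rw [smul_dotProduct, dotProduct_comm, hy, h j hj, smul_zero]
  have hy0 : Xt *ᵥ c' = 0 := dotProduct_self_eq_zero.mp hyy
  have hU : IsUnit (Xtᵀ * Xt) := (Matrix.isUnit_iff_isUnit_det _).mpr hfull
  have hinj := Matrix.mulVec_injective_iff_isUnit.mpr hU
  have hc0 : c' = 0 := by
    apply hinj
    show (Xtᵀ * Xt) *ᵥ c' = (Xtᵀ * Xt) *ᵥ 0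
    rw [← Matrix.mulVec_mulVec, hy0, Matrix.mulVec_zero, Matrix.mulVec_zero]
  intro k hk
  have := congrFun hc0 k
  simpa [hc', hk] using this

private lemma qronos_col_ne {m N : ℕ} {Xt : Matrix (Fin m) (Fin N) ℝ}
    (hfull : IsUnit (Xtᵀ * Xt).det) (t : Fin N) :
    (fun i => Xt i t) ⬝ᵥ (fun i => Xt i t) ≠ 0 := by
  intro h0
  have h1 := qronos_col_inj hfull {t} (fun _ => (1 : ℝ)) ?_ t (Finset.mem_singleton_self t)
  · exact one_ne_zero h1
  · intro k hk
    rw [Finset.mem_singleton] at hk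
    subst hk
    simpa using h0


/-- **Equivalence theorem for Qronos (Theorem 3.1).**
Let `X, Xt ∈ ℝ^{m×N}` with `Xt` of full column rank, `𝒜 ⊆ ℝ` a finite nonempty grid
with round-to-nearest map `𝒬`, and `w ∈ ℝ^N`.  The original Qronos iterates
`(q_t, W^{(t)})` (error-correcting grid selection followed by global least-squares
error diffusion) coincide with the alternative iterates `(q̂_t, Ŵ^{(t)})` which, for
`t ≥ 2`, select `q̂_t = 𝒬(Ŵ^{(t−1)}_t)` by round-to-nearest and diffuse only the
one-step error: for all `t`, `q_t = q̂_t` and `W^{(t−1)}_{≥t} = Ŵ^{(t−1)}_{≥t}`.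
(Indices of steps are 0-based here: step `t : Fin N` corresponds to step `t+1` of the
paper, `W k` denotes `w^{(k)}`, and only coordinates `≥ k` of `W k` are meaningful.) -/
theorem qronos_equivalence {m N : ℕ}
    (X Xt : Matrix (Fin m) (Fin N) ℝ) (hfull : IsUnit (Xtᵀ * Xt).det)
    (𝒜 : Finset ℝ) (h𝒜 : 𝒜.Nonempty)
    (𝒬 : ℝ → ℝ) (h𝒬mem : ∀ x : ℝ, 𝒬 x ∈ 𝒜)
    (h𝒬near : ∀ x : ℝ, ∀ a ∈ 𝒜, |𝒬 x - x| ≤ |a - x|)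
    (w : Fin N → ℝ)
    (q : Fin N → ℝ) (W : ℕ → Fin N → ℝ)
    (qh : Fin N → ℝ) (Wh : ℕ → Fin N → ℝ)
    (hW0 : W 0 = w)
    -- original error-correcting grid selection:
    (hq : ∀ t : Fin N, q t =
      𝒬 (((X *ᵥ w - (∑ j ∈ Finset.Iio t, q j • fun i => Xt i j) -
            ∑ j ∈ Finset.Ioi t, W t.val j • fun i => Xt i j) ⬝ᵥ fun i => Xt i t) /
          ((fun i => Xt i t) ⬝ᵥ fun i => Xt i t)))
    -- original error diffusion: `W (t+1)` minimizes the global reconstruction error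
    (hWmin : ∀ t : Fin N, ∀ v : Fin N → ℝ,
      (X *ᵥ w - (∑ j ∈ Finset.Iic t, q j • fun i => Xt i j) -
          ∑ j ∈ Finset.Ioi t, W (t.val + 1) j • fun i => Xt i j) ⬝ᵥ
        (X *ᵥ w - (∑ j ∈ Finset.Iic t, q j • fun i => Xt i j) -
          ∑ j ∈ Finset.Ioi t, W (t.val + 1) j • fun i => Xt i j) ≤
      (X *ᵥ w - (∑ j ∈ Finset.Iic t, q j • fun i => Xt i j) -
          ∑ j ∈ Finset.Ioi t, v j • fun i => Xt i j) ⬝ᵥ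
        (X *ᵥ w - (∑ j ∈ Finset.Iic t, q j • fun i => Xt i j) -
          ∑ j ∈ Finset.Ioi t, v j • fun i => Xt i j))
    (hWh0 : Wh 0 = w)
    -- alternative first step: same formulas as the original ones
    (hqh0 : ∀ t : Fin N, t.val = 0 → qh t =
      𝒬 (((X *ᵥ w - (∑ j ∈ Finset.Iio t, qh j • fun i => Xt i j) -
            ∑ j ∈ Finset.Ioi t, Wh t.val j • fun i => Xt i j) ⬝ᵥ fun i => Xt i t) /
          ((fun i => Xt i t) ⬝ᵥ fun i => Xt i t)))
    (hWhmin0 : ∀ t : Fin N, t.val = 0 → ∀ v : Fin N → ℝ,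
      (X *ᵥ w - (∑ j ∈ Finset.Iic t, qh j • fun i => Xt i j) -
          ∑ j ∈ Finset.Ioi t, Wh (t.val + 1) j • fun i => Xt i j) ⬝ᵥ
        (X *ᵥ w - (∑ j ∈ Finset.Iic t, qh j • fun i => Xt i j) -
          ∑ j ∈ Finset.Ioi t, Wh (t.val + 1) j • fun i => Xt i j) ≤
      (X *ᵥ w - (∑ j ∈ Finset.Iic t, qh j • fun i => Xt i j) -
          ∑ j ∈ Finset.Ioi t, v j • fun i => Xt i j) ⬝ᵥ
        (X *ᵥ w - (∑ j ∈ Finset.Iic t, qh j • fun i => Xt i j) -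
          ∑ j ∈ Finset.Ioi t, v j • fun i => Xt i j))
    -- alternative later steps: round-to-nearest of the current weight
    (hqh : ∀ t : Fin N, 1 ≤ t.val → qh t = 𝒬 (Wh t.val t))
    -- alternative later steps: one-step error diffusion
    (hWhmin : ∀ t : Fin N, 1 ≤ t.val → ∀ v : Fin N → ℝ,
      ((qh t - Wh t.val t) • (fun i => Xt i t) +
          ∑ j ∈ Finset.Ioi t, (Wh (t.val + 1) j - Wh t.val j) • fun i => Xt i j) ⬝ᵥ
        ((qh t - Wh t.val t) • (fun i => Xt i t) +
          ∑ j ∈ Finset.Ioi t, (Wh (t.val + 1) j - Wh t.val j) • fun i => Xt i j) ≤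
      ((qh t - Wh t.val t) • (fun i => Xt i t) +
          ∑ j ∈ Finset.Ioi t, (v j - Wh t.val j) • fun i => Xt i j) ⬝ᵥ
        ((qh t - Wh t.val t) • (fun i => Xt i t) +
          ∑ j ∈ Finset.Ioi t, (v j - Wh t.val j) • fun i => Xt i j)) :
    ∀ t : Fin N, q t = qh t ∧ ∀ j ∈ Finset.Ici t, W t.val j = Wh t.val j := by
  suffices H : ∀ n : ℕ, ∀ t : Fin N, t.val = n →
      (q t = qh t ∧ ∀ j ∈ Finset.Ici t, W t.val j = Wh t.val j) by
    intro t; exact H t.val t rfl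
  have horthW : ∀ s : Fin N, ∀ k ∈ Finset.Ioi s,
      (X *ᵥ w - (∑ j ∈ Finset.Iic s, q j • fun i => Xt i j) -
        ∑ j ∈ Finset.Ioi s, W (s.val + 1) j • fun i => Xt i j) ⬝ᵥ (fun i => Xt i k) = 0 := by
    intro s
    exact qronos_orth_of_min _ _ _ (hWmin s)
  have horthWh0 : ∀ s : Fin N, s.val = 0 → ∀ k ∈ Finset.Ioi s,
      (X *ᵥ w - (∑ j ∈ Finset.Iic s, qh j • fun i => Xt i j) -
        ∑ j ∈ Finset.Ioi s, Wh (s.val + 1) j • fun i => Xt i j) ⬝ᵥ (fun i => Xt i k) = 0 := by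
    intro s hs
    exact qronos_orth_of_min _ _ _ (hWhmin0 s hs)
  have horthWh : ∀ s : Fin N, 1 ≤ s.val → ∀ k ∈ Finset.Ioi s,
      ((qh s - Wh s.val s) • (fun i => Xt i s) +
        ∑ j ∈ Finset.Ioi s, (Wh (s.val + 1) j - Wh s.val j) • fun i => Xt i j) ⬝ᵥ
        (fun i => Xt i k) = 0 := by
    intro s hs k hk
    have key : ∀ v : Fin N → ℝ,
        ((qh s - Wh s.val s) • (fun i => Xt i s) +
          ∑ j ∈ Finset.Ioi s, (v j - Wh s.val j) • fun i => Xt i j)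
        = -(((∑ j ∈ Finset.Ioi s, Wh s.val j • fun i => Xt i j) -
              (qh s - Wh s.val s) • (fun i => Xt i s)) -
            ∑ j ∈ Finset.Ioi s, v j • fun i => Xt i j) := by
      intro v
      simp only [sub_smul, Finset.sum_sub_distrib]
      abel
    have hmin := hWhmin s hs
    have horth := qronos_orth_of_min (fun j => fun i => Xt i j)
      ((∑ j ∈ Finset.Ioi s, Wh s.val j • fun i => Xt i j) -
        (qh s - Wh s.val s) • (fun i => Xt i s)) (Wh (s.val + 1))
      (fun v => by
        have h1 := hmin v
        rw [key (Wh (s.val + 1)), key v] at h1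
        simpa only [neg_dotProduct, dotProduct_neg, neg_neg] using h1) k hk
    rw [key (Wh (s.val + 1)), neg_dotProduct, neg_eq_zero]
    exact horth
  intro n
  induction n with
  | zero =>
    intro t ht
    have hIio0 : Finset.Iio t = (∅ : Finset (Fin N)) := by
      ext j
      simp only [Finset.mem_Iio, Finset.notMem_empty, iff_false, not_lt, Fin.le_def, ht]
      omega
    constructor
    · rw [hq t, hqh0 t ht, hIio0, ht, hW0, hWh0]
      simp
    · intro j _
      rw [ht, hW0, hWh0]
  | succ n IH =>
    intro t ht
    have htlt := t.isLt
    have hnN : n < N := by omega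
    set s : Fin N := ⟨n, hnN⟩ with hsdef
    have hsv : (s : ℕ) = n := rfl
    obtain ⟨ihq, ihW⟩ := IH s hsv
    have htIoi : t ∈ Finset.Ioi s := by
      simp only [Finset.mem_Ioi, Fin.lt_def, hsv, ht]; omega
    have hIioIic : Finset.Iio t = Finset.Iic s := by
      ext j
      simp only [Finset.mem_Iio, Finset.mem_Iic, Fin.lt_def, Fin.le_def, hsv, ht]; omega
    have hIciIoi : Finset.Ici t = Finset.Ioi s := by
      ext j
      simp only [Finset.mem_Ici, Finset.mem_Ioi, Fin.le_def, Fin.lt_def, hsv, ht]; omega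
    have hIoiIns : Finset.Ioi s = insert t (Finset.Ioi t) := by
      rw [Finset.Ioi_insert]; exact hIciIoi.symm
    have hW2 : ∀ j ∈ Finset.Ici t, W t.val j = Wh t.val j := by
      have hA : ∀ k ∈ Finset.Ioi s,
          (∑ j ∈ Finset.Ioi s, (W (n + 1) j - Wh (n + 1) j) • fun i => Xt i j) ⬝ᵥ
            (fun i => Xt i k) = 0 := by
        rcases Nat.eq_zero_or_pos n with hn0 | npos
        · subst hn0
          intro k hk
          have hOW := horthW s k hk
          have hOWh := horthWh0 s hsv k hk
          rw [hsv] at hOW hOWh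
          have hqq : (∑ j ∈ Finset.Iic s, qh j • fun i => Xt i j)
              = ∑ j ∈ Finset.Iic s, q j • (fun i => Xt i j) := by
            refine Finset.sum_congr rfl fun j hj => ?_
            have hj' : j = s := Fin.ext (by
              have h2 := Finset.mem_Iic.mp hj
              rw [Fin.le_def] at h2
              omega)
            rw [hj', ihq]
          rw [hqq] at hOWh
          have e : (∑ j ∈ Finset.Ioi s, (W (0 + 1) j - Wh (0 + 1) j) • fun i => Xt i j)
              = (X *ᵥ w - (∑ j ∈ Finset.Iic s, q j • fun i => Xt i j) -
                  ∑ j ∈ Finset.Ioi s, Wh (0 + 1) j • fun i => Xt i j)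
                - (X *ᵥ w - (∑ j ∈ Finset.Iic s, q j • fun i => Xt i j) -
                  ∑ j ∈ Finset.Ioi s, W (0 + 1) j • fun i => Xt i j) := by
            simp only [sub_smul, Finset.sum_sub_distrib]
            abel
          rw [e, sub_dotProduct, hOWh, hOW, sub_zero]
        · intro k hk
          have hps : n - 1 < N := by omega
          set ps : Fin N := ⟨n - 1, hps⟩ with hpsdef
          have hpsv : (ps : ℕ) = n - 1 := rfl
          have hIicIio : Finset.Iic ps = Finset.Iio s := by
            ext j
            simp only [Finset.mem_Iic, Finset.mem_Iio, Fin.le_def, Fin.lt_def, hpsv, hsv]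
            omega
          have hIoiIci : Finset.Ioi ps = Finset.Ici s := by
            ext j
            simp only [Finset.mem_Ioi, Finset.mem_Ici, Fin.le_def, Fin.lt_def, hpsv, hsv]
            omega
          have hRs := horthW ps
          rw [hIicIio, hIoiIci] at hRs
          have hps1 : (ps : ℕ) + 1 = n := by omega
          rw [hps1] at hRs
          have hIicIns : Finset.Iic s = insert s (Finset.Iio s) := (Finset.Iio_insert s).symm
          have hIciIns : Finset.Ici s = insert s (Finset.Ioi s) := (Finset.Ioi_insert s).symm
          have hdecomp : ∀ v : Fin N → ℝ,
              X *ᵥ w - (∑ j ∈ Finset.Iic s, q j • fun i => Xt i j) -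
                ∑ j ∈ Finset.Ioi s, v j • (fun i => Xt i j)
              = (X *ᵥ w - (∑ j ∈ Finset.Iio s, q j • fun i => Xt i j) -
                  ∑ j ∈ Finset.Ici s, W n j • fun i => Xt i j)
                - ((q s - W n s) • (fun i => Xt i s) +
                  ∑ j ∈ Finset.Ioi s, (v j - W n j) • fun i => Xt i j) := by
            intro v
            rw [hIicIns, hIciIns, Finset.sum_insert Finset.notMem_Iio_self,
              Finset.sum_insert Finset.notMem_Ioi_self]
            simp only [sub_smul, Finset.sum_sub_distrib]
            abel
          have hZw : ∀ k' ∈ Finset.Ioi s,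
              ((q s - W n s) • (fun i => Xt i s) +
                ∑ j ∈ Finset.Ioi s, (W (n + 1) j - W n j) • fun i => Xt i j) ⬝ᵥ
                (fun i => Xt i k') = 0 := by
            intro k' hk'
            have h1 := horthW s k' hk'
            rw [hsv] at h1
            rw [hdecomp (W (n + 1)), sub_dotProduct,
              hRs k' (Finset.mem_Ici.mpr (le_of_lt (Finset.mem_Ioi.mp hk'))),
              zero_sub, neg_eq_zero] at h1
            exact h1
          have hZwh : ((q s - W n s) • (fun i => Xt i s) +
                ∑ j ∈ Finset.Ioi s, (Wh (n + 1) j - W n j) • fun i => Xt i j) ⬝ᵥ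
                (fun i => Xt i k) = 0 := by
            have h1 := horthWh s (by omega) k hk
            rw [hsv] at h1
            rw [← ihq] at h1
            have hWhs : Wh n s = W n s := (ihW s (Finset.mem_Ici.mpr le_rfl)).symm
            rw [hWhs] at h1
            have hsum : (∑ j ∈ Finset.Ioi s, (Wh (n + 1) j - Wh n j) • fun i => Xt i j)
                = ∑ j ∈ Finset.Ioi s, (Wh (n + 1) j - W n j) • (fun i => Xt i j) := by
              refine Finset.sum_congr rfl fun j hj => ?_
              rw [ihW j (Finset.mem_Ici.mpr (le_of_lt (Finset.mem_Ioi.mp hj)))]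
            rw [hsum] at h1
            exact h1
          have e : (∑ j ∈ Finset.Ioi s, (W (n + 1) j - Wh (n + 1) j) • fun i => Xt i j)
              = ((q s - W n s) • (fun i => Xt i s) +
                  ∑ j ∈ Finset.Ioi s, (W (n + 1) j - W n j) • fun i => Xt i j)
                - ((q s - W n s) • (fun i => Xt i s) +
                  ∑ j ∈ Finset.Ioi s, (Wh (n + 1) j - W n j) • fun i => Xt i j) := by
            simp only [sub_smul, Finset.sum_sub_distrib]
            abel
          rw [e, sub_dotProduct, hZw k hk, hZwh, sub_zero]
      have hall := qronos_col_inj hfull (Finset.Ioi s)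
        (fun j => W (n + 1) j - Wh (n + 1) j) hA
      intro j hj
      rw [ht]
      exact sub_eq_zero.mp (hall j (hIciIoi ▸ hj))
    refine ⟨?_, hW2⟩
    have hRt := horthW s t htIoi
    rw [hsv] at hRt
    have hnum : X *ᵥ w - (∑ j ∈ Finset.Iio t, q j • fun i => Xt i j) -
        ∑ j ∈ Finset.Ioi t, W (t : ℕ) j • (fun i => Xt i j)
        = (X *ᵥ w - (∑ j ∈ Finset.Iic s, q j • fun i => Xt i j) -
            ∑ j ∈ Finset.Ioi s, W (n + 1) j • fun i => Xt i j)
          + W (t : ℕ) t • (fun i => Xt i t) := by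
      rw [hIioIic, hIoiIns, Finset.sum_insert Finset.notMem_Ioi_self, ht]
      abel
    have hdot : ((X *ᵥ w - (∑ j ∈ Finset.Iio t, q j • fun i => Xt i j) -
        ∑ j ∈ Finset.Ioi t, W (t : ℕ) j • fun i => Xt i j) ⬝ᵥ fun i => Xt i t)
        = W (t : ℕ) t * ((fun i => Xt i t) ⬝ᵥ fun i => Xt i t) := by
      rw [hnum, add_dotProduct, hRt, smul_dotProduct, zero_add, smul_eq_mul]
    have harg : (((X *ᵥ w - (∑ j ∈ Finset.Iio t, q j • fun i => Xt i j) -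
        ∑ j ∈ Finset.Ioi t, W (t : ℕ) j • fun i => Xt i j) ⬝ᵥ fun i => Xt i t) /
        ((fun i => Xt i t) ⬝ᵥ fun i => Xt i t)) = W (t : ℕ) t := by
      rw [hdot, mul_div_assoc, div_self (qronos_col_ne hfull t), mul_one]
    rw [hq t, harg, hqh t (by omega), hW2 t (Finset.mem_Ici.mpr le_rfl)]
end

section
/- Let X, X̃ ∈ ℝ^{m×N}, w ∈ ℝ^N (original weights), 1 ≤ t ≤ N−1, q ∈ ℝ^t (already-quantized entries), and u ∈ ℝ^{N−t} (current auxiliary weights for indices t+1,…,N). Suppose the residual r := Xw − Σ_{j=1}^{t} q_j X̃_j − Σ_{j=t+1}^{N} u_{j−t} X̃_j is orthogonal to X̃_j for every j = t+1,…,N (least-squares optimality of u), and suppose X̃_{t+1} ≠ 0. Then ⟨Xw − Σ_{j=1}^{t} q_j X̃_j − Σ_{j=t+2}^{N} u_{j−t} X̃_j , X̃_{t+1}⟩ / ‖X̃_{t+1}‖² = u_1, i.e., the real-valued error-correcting minimizer at step t+1 equals the (t+1)-st current weight; consequently the error-correcting grid selection at step t+1 equals 𝒬(u₁) for any round-to-nearest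 map 𝒬 onto a finite grid 𝒜. -/
open Matrix

/-- **Key induction step of the Qronos equivalence theorem.**
Let `X, Xt ∈ ℝ^{m×N}`, `w ∈ ℝ^N`, `1 ≤ t ≤ N−1`, `q ∈ ℝ^t`, `u ∈ ℝ^{N−t}`.
If the residual `r = Xw − Σ_{j=1}^t q_j Xt_j − Σ_{j=t+1}^N u_{j−t} Xt_j` is orthogonal to
`Xt_j` for every `j = t+1,…,N`, and `Xt_{t+1} ≠ 0`, then the real-valued error-correcting
minimizer at step `t+1` equals `u₁`:
`⟨Xw − Σ_{j=1}^t q_j Xt_j − Σ_{j=t+2}^N u_{j−t} Xt_j, Xt_{t+1}⟩ / ‖Xt_{t+1}‖² = u₁`,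
and consequently the grid selection at step `t+1` equals `𝒬(u₁)` for any round-to-nearest
map `𝒬` onto a finite nonempty grid `𝒜`. -/
theorem qronos_induction_step_rtn {m N t : ℕ} (ht1 : 1 ≤ t) (ht2 : t ≤ N - 1)
    (X Xt : Matrix (Fin m) (Fin N) ℝ) (w : Fin N → ℝ)
    (q : Fin t → ℝ) (u : Fin (N - t) → ℝ)
    (horth : ∀ j : Fin (N - t),
      (X *ᵥ w - (∑ j : Fin t, q j • fun i => Xt i (Fin.castLE (by omega) j)) -
          ∑ j : Fin (N - t), u j • fun i => Xt i ⟨t + j.val, by have := j.isLt; omega⟩) ⬝ᵥ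
        (fun i => Xt i ⟨t + j.val, by have := j.isLt; omega⟩) = 0)
    (hcol : (fun i => Xt i ⟨t, by omega⟩) ≠ (0 : Fin m → ℝ)) :
    ((X *ᵥ w - (∑ j : Fin t, q j • fun i => Xt i (Fin.castLE (by omega) j)) -
          ∑ j ∈ Finset.univ.filter (fun j : Fin (N - t) => 1 ≤ (j : ℕ)),
            u j • fun i => Xt i ⟨t + j.val, by have := j.isLt; omega⟩) ⬝ᵥ
        (fun i => Xt i ⟨t, by omega⟩)) /
        ((fun i => Xt i ⟨t, by omega⟩) ⬝ᵥ fun i => Xt i ⟨t, by omega⟩) =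
      u ⟨0, by omega⟩ ∧
    ∀ (𝒜 : Finset ℝ) (𝒬 : ℝ → ℝ), 𝒜.Nonempty → (∀ x : ℝ, 𝒬 x ∈ 𝒜) →
      (∀ x : ℝ, ∀ a ∈ 𝒜, |𝒬 x - x| ≤ |a - x|) →
      𝒬 (((X *ᵥ w - (∑ j : Fin t, q j • fun i => Xt i (Fin.castLE (by omega) j)) -
            ∑ j ∈ Finset.univ.filter (fun j : Fin (N - t) => 1 ≤ (j : ℕ)),
              u j • fun i => Xt i ⟨t + j.val, by have := j.isLt; omega⟩) ⬝ᵥ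
          (fun i => Xt i ⟨t, by omega⟩)) /
          ((fun i => Xt i ⟨t, by omega⟩) ⬝ᵥ fun i => Xt i ⟨t, by omega⟩)) =
        𝒬 (u ⟨0, by omega⟩) := by
  have hNt : 0 < N - t := by omega
  have key : ((X *ᵥ w - (∑ j : Fin t, q j • fun i => Xt i (Fin.castLE (by omega) j)) -
          ∑ j ∈ Finset.univ.filter (fun j : Fin (N - t) => 1 ≤ (j : ℕ)),
            u j • fun i => Xt i ⟨t + j.val, by have := j.isLt; omega⟩) ⬝ᵥ
        (fun i => Xt i ⟨t, by omega⟩)) /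
        ((fun i => Xt i ⟨t, by omega⟩) ⬝ᵥ fun i => Xt i ⟨t, by omega⟩) =
      u ⟨0, by omega⟩ := by
    set v : Fin m → ℝ := fun i => Xt i ⟨t, by omega⟩ with hv
    have hvv : v ⬝ᵥ v ≠ 0 := by
      rwa [Ne, dotProduct_self_eq_zero]
    have h0 := horth ⟨0, hNt⟩
    have hv0 : (fun i => Xt i ⟨t + (⟨0, hNt⟩ : Fin (N - t)).val, by omega⟩) = v := by
      simp [hv]
    rw [hv0] at h0
    have hsplit : (Finset.univ.filter (fun j : Fin (N - t) => ¬ 1 ≤ (j : ℕ))) =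
        {(⟨0, hNt⟩ : Fin (N - t))} := by
      ext j
      simp [Fin.ext_iff]
    have hsum : (∑ j : Fin (N - t), u j • fun i => Xt i ⟨t + j.val, by have := j.isLt; omega⟩) =
        (∑ j ∈ Finset.univ.filter (fun j : Fin (N - t) => 1 ≤ (j : ℕ)),
            u j • fun i => Xt i ⟨t + j.val, by have := j.isLt; omega⟩) + u ⟨0, hNt⟩ • v := by
      rw [← Finset.sum_filter_add_sum_filter_not Finset.univ (fun j : Fin (N - t) => 1 ≤ (j : ℕ))]
      rw [hsplit, Finset.sum_singleton, hv0]
    rw [hsum] at h0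
    have : (X *ᵥ w - (∑ j : Fin t, q j • fun i => Xt i (Fin.castLE (by omega) j)) -
          ∑ j ∈ Finset.univ.filter (fun j : Fin (N - t) => 1 ≤ (j : ℕ)),
            u j • fun i => Xt i ⟨t + j.val, by have := j.isLt; omega⟩) ⬝ᵥ v =
        u ⟨0, hNt⟩ * (v ⬝ᵥ v) := by
      have h1 : (X *ᵥ w - (∑ j : Fin t, q j • fun i => Xt i (Fin.castLE (by omega) j)) -
          ∑ j ∈ Finset.univ.filter (fun j : Fin (N - t) => 1 ≤ (j : ℕ)),
            u j • fun i => Xt i ⟨t + j.val, by have := j.isLt; omega⟩) =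
          (X *ᵥ w - (∑ j : Fin t, q j • fun i => Xt i (Fin.castLE (by omega) j)) -
          ((∑ j ∈ Finset.univ.filter (fun j : Fin (N - t) => 1 ≤ (j : ℕ)),
            u j • fun i => Xt i ⟨t + j.val, by have := j.isLt; omega⟩) + u ⟨0, hNt⟩ • v))
          + u ⟨0, hNt⟩ • v := by
        abel
      rw [h1, add_dotProduct, h0, smul_dotProduct, zero_add, smul_eq_mul]
    rw [this, mul_div_assoc, div_self hvv, mul_one]
  exact ⟨key, fun 𝒜 𝒬 _ _ _ => by rw [key]⟩
end

section
/- Let X ∈ ℝ^{m×N} have full column rank, set H = XᵀX, and let H⁻¹ = L Lᵀ be the Cholesky decomposition with L lower triangular with positive diagonal entries. Then for every t = 1,…,N, the matrix X_{≥t}ᵀX_{≥t} is invertible and (X_{≥t}ᵀ X_{≥t})⁻¹ = L_{≥t,≥t} (L_{≥t,≥t})ᵀ, where L_{≥t,≥t} denotes the trailing principal submatrix of L consisting of rows and columns t,…,N; moreover L_{≥t,≥t} is lower triangular with positive diagonal, so this is the Cholesky decomposition of (X_{≥t}ᵀ X_{≥t})⁻¹. -/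
open Matrix

private lemma sum_trail {N s n' : ℕ} (hsn : s + n' = N) (e : Fin n' → Fin N)
    (he : ∀ a, (e a : ℕ) = s + a) (g : Fin N → ℝ)
    (h0 : ∀ k : Fin N, (k : ℕ) < s → g k = 0) :
    (∑ k, g k) = ∑ a, g (e a) := by
  classical
  have hinj : ∀ x ∈ Finset.univ (α := Fin n'), ∀ y ∈ Finset.univ, e x = e y → x = y := by
    intro x _ y _ h
    have hx := he x; have hy := he y
    have hv : (e x : ℕ) = e y := congrArg Fin.val h
    exact Fin.ext (by omega)
  rw [← Finset.sum_image hinj]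
  refine (Finset.sum_subset (Finset.subset_univ _) ?_).symm
  intro k _ hk
  apply h0
  by_contra hlt
  push_neg at hlt
  apply hk
  refine Finset.mem_image.mpr ⟨⟨k.val - s, by have := k.isLt; omega⟩, Finset.mem_univ _, ?_⟩
  apply Fin.ext
  rw [he]
  simp
  omega

/-- **Trailing Cholesky factors.**
Let `X ∈ ℝ^{m×N}` have full column rank, `H = XᵀX`, and `H⁻¹ = L Lᵀ` the Cholesky
decomposition (`L` lower triangular with positive diagonal).  Then for every
`t = 1,…,N`, the matrix `X_{≥t}ᵀX_{≥t}` is invertible and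
`(X_{≥t}ᵀX_{≥t})⁻¹ = L_{≥t,≥t} (L_{≥t,≥t})ᵀ`, where `L_{≥t,≥t}` is lower triangular
with positive diagonal, i.e. this is the Cholesky decomposition of `(X_{≥t}ᵀX_{≥t})⁻¹`. -/
theorem trailing_cholesky_factor {m N : ℕ}
    (X : Matrix (Fin m) (Fin N) ℝ) (hX : IsUnit (Xᵀ * X).det)
    (L : Matrix (Fin N) (Fin N) ℝ)
    (hLlow : ∀ i j : Fin N, i < j → L i j = 0)
    (hLdiag : ∀ i : Fin N, 0 < L i i)
    (hChol : (Xᵀ * X)⁻¹ = L * Lᵀ) :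
    ∀ (t : ℕ) (ht1 : 1 ≤ t) (ht2 : t ≤ N),
      ∀ At : Matrix (Fin m) (Fin (N - t + 1)) ℝ,
        At = (Matrix.of fun i (j : Fin (N - t + 1)) =>
          X i ⟨t - 1 + j.val, by have := j.isLt; omega⟩) →
      ∀ Lt : Matrix (Fin (N - t + 1)) (Fin (N - t + 1)) ℝ,
        Lt = (Matrix.of fun i j : Fin (N - t + 1) =>
          L ⟨t - 1 + i.val, by have := i.isLt; omega⟩
            ⟨t - 1 + j.val, by have := j.isLt; omega⟩) →
      IsUnit (Atᵀ * At).det ∧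
        (Atᵀ * At)⁻¹ = Lt * Ltᵀ ∧
        (∀ i j : Fin (N - t + 1), i < j → Lt i j = 0) ∧
        (∀ i : Fin (N - t + 1), 0 < Lt i i) := by
  intro t ht1 ht2 At hAt Lt hLt
  set H : Matrix (Fin N) (Fin N) ℝ := Xᵀ * X with hH
  -- e : embedding of trailing indices
  have hb : ∀ a : Fin (N - t + 1), t - 1 + (a : ℕ) < N := by
    intro a; have := a.isLt; omega
  set e : Fin (N - t + 1) → Fin N := fun a => ⟨t - 1 + a.val, hb a⟩ with he
  have heval : ∀ a, ((e a : Fin N) : ℕ) = (t - 1) + a := fun a => rfl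
  -- basic facts on At, Lt
  have hAt' : ∀ (r : Fin m) (a : Fin (N - t + 1)), At r a = X r (e a) := by
    intro r a; rw [hAt]; rfl
  have hLt' : ∀ (a b : Fin (N - t + 1)), Lt a b = L (e a) (e b) := by
    intro a b; rw [hLt]; rfl
  have helt : ∀ a b : Fin (N - t + 1), a < b → e a < e b := by
    intro a b h
    simp only [Fin.lt_def, heval]
    omega
  -- From the Cholesky hypothesis : Lᵀ * H * L = 1
  have hH1 : H * (L * Lᵀ) = 1 := by
    rw [← hChol]; exact Matrix.mul_nonsing_inv _ hX
  have h2a : (L * Lᵀ) * H = 1 := mul_eq_one_comm.mp hH1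
  have h2 : L * (Lᵀ * H) = 1 := by rw [← mul_assoc]; exact h2a
  have h3 : (Lᵀ * H) * L = 1 := mul_eq_one_comm.mp h2
  -- key identity on the trailing block
  have hkey : Ltᵀ * (Atᵀ * At) * Lt = 1 := by
    ext i j
    have h3' := congrFun (congrFun h3 (e i)) (e j)
    simp only [mul_apply, transpose_apply] at h3'
    -- restrict outer sum
    rw [sum_trail (by omega : t - 1 + (N - t + 1) = N) e heval _ (fun k hk => by
      have : L k (e j) = 0 := hLlow _ _ (by simp only [Fin.lt_def, heval]; omega)
      simp [this])] at h3'
    -- restrict inner sums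
    have hin : ∀ b : Fin (N - t + 1),
        (∑ k, L k (e i) * H k (e b)) = ∑ a, L (e a) (e i) * H (e a) (e b) := by
      intro b
      exact sum_trail (by omega : t - 1 + (N - t + 1) = N) e heval _ (fun k hk => by
        have : L k (e i) = 0 := hLlow _ _ (by simp only [Fin.lt_def, heval]; omega)
        simp [this])
    simp only [hin] at h3'
    have h1e : (1 : Matrix (Fin N) (Fin N) ℝ) (e i) (e j)
        = (1 : Matrix (Fin (N - t + 1)) (Fin (N - t + 1)) ℝ) i j := by
      by_cases h : i = j
      · subst h; simp
      · have : e i ≠ e j := by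
          intro hc
          exact h (Fin.ext (by have := congrArg Fin.val hc; simp only [heval] at this; omega))
        simp [one_apply, h, this]
    rw [h1e] at h3'
    rw [← h3']
    simp only [mul_apply, transpose_apply, hAt', hLt']
    refine Finset.sum_congr rfl fun b _ => ?_
    congr 1
  -- derive the conclusions
  have h4 : Lt * (Ltᵀ * (Atᵀ * At)) = 1 := mul_eq_one_comm.mp hkey
  have h5 : (Lt * Ltᵀ) * (Atᵀ * At) = 1 := by rw [mul_assoc]; exact h4
  have h6 : (Atᵀ * At) * (Lt * Ltᵀ) = 1 := mul_eq_one_comm.mp h5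
  refine ⟨Matrix.isUnit_det_of_right_inverse h6, Matrix.inv_eq_right_inv h6, ?_, ?_⟩
  · intro i j hij
    rw [hLt']
    exact hLlow _ _ (helt _ _ hij)
  · intro i
    rw [hLt']
    exact hLdiag _
end
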